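/- Riemann-sum representation of the sewing map: let T > 0, μ > 1, κ ∈ [0,μ], and let g : S_T² → L^p(ℝ^n) be continuous such that the three-parameter increment (δ̂g)_{tus} = g_{ts} − g_{tu} − S_{t−u}(g_{us}) satisfies ‖(δ̂g)_{tus}‖_{L^p} ≤ C (t−u)^κ (u−s)^{μ−κ}. Let Λ(δ̂g) be the unique continuous map on S_T² with values in L^p(ℝ^n) satisfying δ̂(Λ(δ̂g)) = δ̂g and sup_{s<t} ‖(Λ(δ̂g))_{ts}‖_{L^p}/(t−s)^μ < ∞ (given by the sewing theorem). Then, setting f_t = g_{t0} − (Λ(δ̂g))_{t0}, one has g_{ts} − (Λ(δ̂g))_{ts} = f_t − S_{t−s} f_s for all (s,t) ∈ S_T², and for every 0 ≤ s ≤ t ≤ T, f_t − S_{t−s} f_s = lim Σ_{k} S_{t−t_{k+1}} (g_{t_{k+1} t_k}), the limit in L^p(ℝ^n) being taken over partitions s = t_0 < t_1 < … < t_m = t of [s,t] as the mesh tends to 0. -/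

import Mathlib

open MeasureTheory Real
open scoped ENNReal

/-- The heat kernel on ℝ^n: `g_t(ξ) = (2πt)^(-n/2) exp(-|ξ|²/(2t))`. -/
noncomputable def heatKernel (n : ℕ) (t : ℝ) : EuclideanSpace ℝ (Fin n) → ℝ :=
  fun ξ => (2 * π * t) ^ (-(n : ℝ) / 2) * Real.exp (-‖ξ‖ ^ 2 / (2 * t))

/-- Convolution of two real functions on ℝ^n. -/
noncomputable def convol {n : ℕ} (f g : EuclideanSpace ℝ (Fin n) → ℝ) :
    EuclideanSpace ℝ (Fin n) → ℝ :=
  fun ξ => ∫ η, f η * g (ξ - η)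

/-- The Lebesgue space `L^p(ℝ^n)`. -/
abbrev LpR (n : ℕ) (p : ℝ) : Type :=
  Lp ℝ (ENNReal.ofReal p) (volume : Measure (EuclideanSpace ℝ (Fin n)))


/-!
Put `h = g - Λ`, so that `δ̂h = 0`. At the triple `(0, s, t)` this is the first claim, and
since `h_{tt} = 0` (because `S_0 = id`), along a partition of `[s, t]` it telescopes to
`h_{ts} = Σ_k S_{t-t_{k+1}} h_{t_{k+1} t_k}`. So the Riemann sum differs from `h_{ts}` by
`Σ_k S_{t-t_{k+1}} Λ_{t_{k+1} t_k}`. The heat semigroup is a contraction of `L^p` (Jensen's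
inequality for the probability density `g_t`), so this error is at most
`K · mesh^{μ-1} · (t - s)`, which tends to `0` because `μ > 1`.
-/

open Filter Topology Finset

theorem rpow_lintegral_mul_le_lintegral_mul_rpow {α : Type*} [MeasurableSpace α]
    {μ : Measure α} {p : ℝ} (hp : 1 ≤ p) {k F : α → ℝ≥0∞} (hk : AEMeasurable k μ)
    (hk1 : ∫⁻ a, k a ∂μ = 1) (hF : AEMeasurable F μ) :
    (∫⁻ a, k a * F a ∂μ) ^ p ≤ ∫⁻ a, k a * F a ^ p ∂μ := by
  -- Jensen's inequality for the probability measure `k • μ`, as `‖F‖₁ ≤ ‖F‖_p`.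
  have : IsProbabilityMeasure (μ.withDensity k) :=
    ⟨by rw [withDensity_apply _ MeasurableSet.univ, Measure.restrict_univ, hk1]⟩
  have hFk : AEMeasurable F (μ.withDensity k) := hF.mono_ac (withDensity_absolutelyContinuous μ k)
  have jensen := eLpNorm'_le_eLpNorm'_of_exponent_le one_pos hp _ hFk.aestronglyMeasurable
  simp only [eLpNorm', enorm_eq_self, ENNReal.rpow_one, div_one,
    lintegral_withDensity_eq_lintegral_mul₀ hk hF,
    lintegral_withDensity_eq_lintegral_mul₀ hk (hF.pow_const p), Pi.mul_apply] at jensen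
  have hp0 : 0 < p := one_pos.trans_le hp
  calc (∫⁻ a, k a * F a ∂μ) ^ p ≤ ((∫⁻ a, k a * F a ^ p ∂μ) ^ (1 / p)) ^ p := by gcongr
    _ = ∫⁻ a, k a * F a ^ p ∂μ := by
      rw [← ENNReal.rpow_mul, one_div_mul_cancel hp0.ne', ENNReal.rpow_one]

section Convolution

variable {n : ℕ} {k f : EuclideanSpace ℝ (Fin n) → ℝ}

theorem enorm_convol_le (hk : ∀ η, 0 ≤ k η) (ξ : EuclideanSpace ℝ (Fin n)) :
    ‖convol k f ξ‖ₑ ≤ ∫⁻ η, ENNReal.ofReal (k η) * ‖f (ξ - η)‖ₑ := by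
  refine (enorm_integral_le_lintegral_enorm _).trans_eq (lintegral_congr fun η => ?_)
  rw [enorm_mul, Real.enorm_eq_ofReal (hk η)]

theorem eLpNorm_convol_le {p : ℝ} (hp : 1 ≤ p) (hk : Measurable k) (hk0 : ∀ η, 0 ≤ k η)
    (hk1 : ∫⁻ η, ENNReal.ofReal (k η) = 1) (hf : AEStronglyMeasurable f) :
    eLpNorm (convol k f) (ENNReal.ofReal p) ≤ eLpNorm f (ENNReal.ofReal p) := by
  have hp0 : 0 < p := one_pos.trans_le hp
  have hkm : Measurable fun η => ENNReal.ofReal (k η) := ENNReal.measurable_ofReal.comp hk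
  have hf_sub : AEMeasurable (fun z : EuclideanSpace ℝ (Fin n) × EuclideanSpace ℝ (Fin n) =>
      ‖f (z.1 - z.2)‖ₑ ^ p) (volume.prod volume) :=
    (hf.aemeasurable.comp_quasiMeasurePreserving
      (quasiMeasurePreserving_sub volume volume)).enorm.pow_const p
  rw [eLpNorm_eq_lintegral_rpow_enorm_toReal (by simpa using hp0) ENNReal.ofReal_ne_top,
    eLpNorm_eq_lintegral_rpow_enorm_toReal (by simpa using hp0) ENNReal.ofReal_ne_top,
    ENNReal.toReal_ofReal hp0.le]
  gcongr ?_ ^ _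
  calc ∫⁻ ξ, ‖convol k f ξ‖ₑ ^ p
      ≤ ∫⁻ ξ, ∫⁻ η, ENNReal.ofReal (k η) * ‖f (ξ - η)‖ₑ ^ p := by
        refine lintegral_mono fun ξ => ?_
        calc ‖convol k f ξ‖ₑ ^ p ≤ (∫⁻ η, ENNReal.ofReal (k η) * ‖f (ξ - η)‖ₑ) ^ p := by
              gcongr; exact enorm_convol_le hk0 ξ
          _ ≤ _ := rpow_lintegral_mul_le_lintegral_mul_rpow hp hkm.aemeasurable hk1
              (hf.aemeasurable.comp_quasiMeasurePreserving
                (quasiMeasurePreserving_sub_left volume ξ)).enorm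
    _ = ∫⁻ η, ENNReal.ofReal (k η) * ∫⁻ ξ, ‖f (ξ - η)‖ₑ ^ p := by
        rw [lintegral_lintegral_swap ((hkm.comp measurable_snd).aemeasurable.mul hf_sub)]
        exact lintegral_congr fun η => lintegral_const_mul' _ _ ENNReal.ofReal_ne_top
    _ = ∫⁻ ξ, ‖f ξ‖ₑ ^ p := by
        simp only [lintegral_sub_right_eq_self (fun ξ => ‖f ξ‖ₑ ^ p)]
        rw [lintegral_mul_const'' _ hkm.aemeasurable, hk1, one_mul]

end Convolution

section HeatKernel

variable {n : ℕ} {t : ℝ}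

theorem heatKernel_nonneg (ht : 0 ≤ t) (ξ : EuclideanSpace ℝ (Fin n)) :
    0 ≤ heatKernel n t ξ := by
  unfold heatKernel; positivity

theorem continuous_heatKernel (n : ℕ) (t : ℝ) : Continuous (heatKernel n t) := by
  unfold heatKernel; fun_prop

theorem integral_heatKernel (ht : 0 < t) : ∫ ξ, heatKernel n t ξ = 1 := by
  have h2πt : 0 < 2 * π * t := by positivity
  have hexp : ∀ ξ : EuclideanSpace ℝ (Fin n), -‖ξ‖ ^ 2 / (2 * t) = -(2 * t)⁻¹ * ‖ξ‖ ^ 2 :=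
    fun ξ => by ring
  simp only [heatKernel, integral_const_mul, hexp]
  rw [GaussianFourier.integral_rexp_neg_mul_sq_norm (by positivity), finrank_euclideanSpace_fin,
    div_inv_eq_mul, show π * (2 * t) = 2 * π * t by ring, ← Real.rpow_add h2πt, neg_div,
    neg_add_cancel, Real.rpow_zero]

theorem lintegral_heatKernel (ht : 0 < t) :
    ∫⁻ ξ, ENNReal.ofReal (heatKernel n t ξ) = 1 := by
  rw [← ofReal_integral_eq_lintegral_ofReal
      (.of_integral_ne_zero (by simp [integral_heatKernel ht]))
      (ae_of_all _ (heatKernel_nonneg ht.le)), integral_heatKernel ht, ENNReal.ofReal_one]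

end HeatKernel

theorem norm_heatSemigroup_le {n : ℕ} {p : ℝ} (hp : 1 ≤ p) [Fact (1 ≤ ENNReal.ofReal p)]
    {S : ℝ → LpR n p →L[ℝ] LpR n p} (hS0 : S 0 = ContinuousLinearMap.id ℝ (LpR n p))
    (hSheat : ∀ t : ℝ, 0 < t → ∀ φ : LpR n p,
      ⇑(S t φ) =ᵐ[volume] convol (heatKernel n t) ⇑φ)
    {r : ℝ} (hr : 0 ≤ r) (φ : LpR n p) : ‖S r φ‖ ≤ ‖φ‖ := by
  rcases hr.eq_or_lt with rfl | hr
  · rw [hS0, ContinuousLinearMap.id_apply]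
  rw [Lp.norm_def, Lp.norm_def, eLpNorm_congr_ae (hSheat r hr φ)]
  exact ENNReal.toReal_mono (Lp.eLpNorm_ne_top φ) <|
    eLpNorm_convol_le hp (continuous_heatKernel n r).measurable (heatKernel_nonneg hr.le)
      (lintegral_heatKernel hr) (Lp.aestronglyMeasurable φ)

theorem rpow_le_rpow_sub_one_mul {x δ μ : ℝ} (hx : 0 ≤ x) (hxδ : x ≤ δ) (hμ : 1 ≤ μ) :
    x ^ μ ≤ δ ^ (μ - 1) * x := by
  calc x ^ μ = x ^ (μ - 1) * x := by
        rw [← Real.rpow_add_one' hx (by linarith), sub_add_cancel]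
    _ ≤ δ ^ (μ - 1) * x := by gcongr

theorem exists_pos_mul_rpow_mul_lt {μ ε : ℝ} (hμ : 1 < μ) (hε : 0 < ε) (K L : ℝ) :
    ∃ δ > 0, K * δ ^ (μ - 1) * L < ε := by
  have hlim : Tendsto (fun δ : ℝ => K * δ ^ (μ - 1) * L) (𝓝[>] 0) (𝓝 0) := by
    have := (((Real.continuous_rpow_const (by linarith : 0 ≤ μ - 1)).tendsto 0).const_mul K
      ).mul_const L
    simpa [Real.zero_rpow (by linarith : μ - 1 ≠ 0)] using this.mono_left nhdsWithin_le_nhds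
  obtain ⟨δ, hδε, hδ⟩ := ((hlim.eventually (gt_mem_nhds hε)).and self_mem_nhdsWithin).exists
  exact ⟨δ, hδ, hδε⟩

theorem mem_Icc_of_le_succ {σ : ℕ → ℝ} {m : ℕ} (hmono : ∀ k < m, σ k ≤ σ (k + 1)) {k : ℕ}
    (hk : k ≤ m) : σ k ∈ Set.Icc (σ 0) (σ m) := by
  have hσ : MonotoneOn σ (Set.Iic m) :=
    monotoneOn_of_le_succ Set.ordConnected_Iic fun a _ _ ha => by
      rw [Order.succ_eq_add_one] at ha ⊢; exact hmono a ha
  exact ⟨hσ (Nat.zero_le m) hk (Nat.zero_le k), hσ hk (le_refl m) hk⟩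

section Sewing

variable {E : Type*} [NormedAddCommGroup E] [NormedSpace ℝ E] {S : ℝ → E →L[ℝ] E}

def hatDelta (S : ℝ → E →L[ℝ] E) (g : ℝ → ℝ → E) (s u t : ℝ) : E :=
  g t s - g t u - S (t - u) (g u s)

theorem hatDelta_sub (g Λ : ℝ → ℝ → E) (s u t : ℝ) :
    hatDelta S (g - Λ) s u t = hatDelta S g s u t - hatDelta S Λ s u t := by
  simp only [hatDelta, Pi.sub_apply, map_sub]; abel

theorem hatDelta_eq_zero_iff {h : ℝ → ℝ → E} {s u t : ℝ} :
    hatDelta S h s u t = 0 ↔ h t u = h t s - S (t - u) (h u s) := by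
  rw [hatDelta, sub_sub, sub_eq_zero, eq_sub_iff_add_eq, eq_comm]

theorem hatDelta_self (hS0 : S 0 = ContinuousLinearMap.id ℝ E) (h : ℝ → ℝ → E) (t : ℝ) :
    hatDelta S h t t t = -h t t := by
  simp [hatDelta, hS0]

variable {T : ℝ} {m : ℕ} {σ : ℕ → ℝ}

theorem eq_sum_of_hatDelta_eq_zero (hS0 : S 0 = ContinuousLinearMap.id ℝ E) {h : ℝ → ℝ → E}
    (hδ : ∀ s u t, 0 ≤ s → s ≤ u → u ≤ t → t ≤ T → hatDelta S h s u t = 0)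
    (hσ0 : 0 ≤ σ 0) (hmono : ∀ k < m, σ k ≤ σ (k + 1)) (hσm : σ m ≤ T) :
    h (σ m) (σ 0) = ∑ k ∈ range m, S (σ m - σ (k + 1)) (h (σ (k + 1)) (σ k)) := by
  have hσ k (hk : k ≤ m) := mem_Icc_of_le_succ hmono hk
  have hdiag : h (σ m) (σ m) = 0 := by
    simpa [hatDelta_self hS0] using hδ _ _ _ (hσ0.trans (hσ m le_rfl).1) le_rfl le_rfl hσm
  have hstep : ∀ k < m,
      S (σ m - σ (k + 1)) (h (σ (k + 1)) (σ k)) = h (σ m) (σ k) - h (σ m) (σ (k + 1)) := by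
    intro k hk
    rw [hatDelta_eq_zero_iff.1 <| hδ _ _ _ (hσ0.trans (hσ k hk.le).1) (hmono k hk)
      (hσ (k + 1) hk).2 hσm, sub_sub_cancel]
  rw [sum_congr rfl fun k hk => hstep k (mem_range.1 hk), sum_range_sub', hdiag, sub_zero]

theorem norm_sum_le_mul_rpow_mesh (hS : ∀ r, 0 ≤ r → ∀ x, ‖S r x‖ ≤ ‖x‖) {μ K δ : ℝ}
    (hμ : 1 ≤ μ) (hK : 0 ≤ K) {Λ : ℝ → ℝ → E}
    (hΛ : ∀ s t, 0 ≤ s → s ≤ t → t ≤ T → ‖Λ t s‖ ≤ K * (t - s) ^ μ)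
    (hσ0 : 0 ≤ σ 0) (hmono : ∀ k < m, σ k ≤ σ (k + 1)) (hσm : σ m ≤ T)
    (hmesh : ∀ k < m, σ (k + 1) - σ k ≤ δ) :
    ‖∑ k ∈ range m, S (σ m - σ (k + 1)) (Λ (σ (k + 1)) (σ k))‖
      ≤ K * δ ^ (μ - 1) * (σ m - σ 0) := by
  have hσ k (hk : k ≤ m) := mem_Icc_of_le_succ hmono hk
  have hterm : ∀ k < m, ‖S (σ m - σ (k + 1)) (Λ (σ (k + 1)) (σ k))‖
      ≤ K * δ ^ (μ - 1) * (σ (k + 1) - σ k) := fun k hk =>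
    calc ‖S (σ m - σ (k + 1)) (Λ (σ (k + 1)) (σ k))‖ ≤ ‖Λ (σ (k + 1)) (σ k)‖ :=
          hS _ (sub_nonneg.2 (hσ (k + 1) hk).2) _
      _ ≤ K * (σ (k + 1) - σ k) ^ μ :=
          hΛ _ _ (hσ0.trans (hσ k hk.le).1) (hmono k hk) ((hσ (k + 1) hk).2.trans hσm)
      _ ≤ K * (δ ^ (μ - 1) * (σ (k + 1) - σ k)) := by
          gcongr; exact rpow_le_rpow_sub_one_mul (sub_nonneg.2 (hmono k hk)) (hmesh k hk) hμ
      _ = K * δ ^ (μ - 1) * (σ (k + 1) - σ k) := by ring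
  calc ‖∑ k ∈ range m, S (σ m - σ (k + 1)) (Λ (σ (k + 1)) (σ k))‖
      ≤ ∑ k ∈ range m, K * δ ^ (μ - 1) * (σ (k + 1) - σ k) :=
        norm_sum_le_of_le _ fun k hk => hterm k (mem_range.1 hk)
    _ = K * δ ^ (μ - 1) * (σ m - σ 0) := by rw [← mul_sum, sum_range_sub]

end Sewing

theorem sewing_riemann_sum_representation_general
    (n : ℕ) (p : ℝ) (hp : 1 ≤ p) [Fact (1 ≤ ENNReal.ofReal p)]
    (S : ℝ → LpR n p →L[ℝ] LpR n p)
    (hS0 : S 0 = ContinuousLinearMap.id ℝ (LpR n p))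
    (hSheat : ∀ t : ℝ, 0 < t → ∀ φ : LpR n p,
      ⇑(S t φ) =ᵐ[volume] convol (heatKernel n t) ⇑φ)
    (T : ℝ) (μ : ℝ) (hμ : 1 < μ)
    (g : ℝ → ℝ → LpR n p)
    (Λg : ℝ → ℝ → LpR n p)
    (hΛbound : ∃ K : ℝ, ∀ s t : ℝ, 0 ≤ s → s ≤ t → t ≤ T → ‖Λg t s‖ ≤ K * (t - s) ^ μ)
    (hΛδ : ∀ s u t : ℝ, 0 ≤ s → s ≤ u → u ≤ t → t ≤ T →
      Λg t s - Λg t u - S (t - u) (Λg u s) = g t s - g t u - S (t - u) (g u s)) :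
    (∀ s t : ℝ, 0 ≤ s → s ≤ t → t ≤ T →
      g t s - Λg t s = (g t 0 - Λg t 0) - S (t - s) (g s 0 - Λg s 0)) ∧
    (∀ s t : ℝ, 0 ≤ s → s ≤ t → t ≤ T →
      ∀ ε : ℝ, 0 < ε → ∃ δ : ℝ, 0 < δ ∧
        ∀ (m : ℕ) (σ : ℕ → ℝ), 0 < m → σ 0 = s → σ m = t →
          (∀ k < m, σ k ≤ σ (k + 1)) → (∀ k < m, σ (k + 1) - σ k ≤ δ) →
          ‖((g t 0 - Λg t 0) - S (t - s) (g s 0 - Λg s 0))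
            - ∑ k ∈ Finset.range m, S (t - σ (k + 1)) (g (σ (k + 1)) (σ k))‖ < ε) := by
  have hδ : ∀ s u t, 0 ≤ s → s ≤ u → u ≤ t → t ≤ T → hatDelta S (g - Λg) s u t = 0 :=
    fun s u t hs hsu hut htT => by
      rw [hatDelta_sub, sub_eq_zero]; exact (hΛδ s u t hs hsu hut htT).symm
  have hrepr : ∀ s t : ℝ, 0 ≤ s → s ≤ t → t ≤ T →
      g t s - Λg t s = (g t 0 - Λg t 0) - S (t - s) (g s 0 - Λg s 0) :=
    fun s t hs hst htT => hatDelta_eq_zero_iff.1 (hδ 0 s t le_rfl hs hst htT)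
  refine ⟨hrepr, fun s t hs hst htT ε hε => ?_⟩
  obtain ⟨K, hK⟩ := hΛbound
  have hK' : ∀ s t : ℝ, 0 ≤ s → s ≤ t → t ≤ T → ‖Λg t s‖ ≤ max K 0 * (t - s) ^ μ :=
    fun s t hs hst htT => (hK s t hs hst htT).trans <|
      mul_le_mul_of_nonneg_right (le_max_left K 0) (Real.rpow_nonneg (sub_nonneg.2 hst) μ)
  obtain ⟨δ, hδpos, hδε⟩ := exists_pos_mul_rpow_mul_lt hμ hε (max K 0) T
  refine ⟨δ, hδpos, fun m σ _ hσ0 hσm hmono hmesh => ?_⟩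
  subst hσ0 hσm
  have hsum := eq_sum_of_hatDelta_eq_zero hS0 hδ hs hmono htT
  simp only [Pi.sub_apply, map_sub, sum_sub_distrib] at hsum
  rw [← hrepr _ _ hs hst htT, hsum, sub_sub_cancel_left, norm_neg]
  calc _ ≤ max K 0 * δ ^ (μ - 1) * (σ m - σ 0) :=
        norm_sum_le_mul_rpow_mesh (fun _ => norm_heatSemigroup_le hp hS0 hSheat) hμ.le
          (le_max_right K 0) hK' hs hmono htT hmesh
    _ ≤ max K 0 * δ ^ (μ - 1) * T := by gcongr; linarith
    _ < ε := hδε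

/-- Riemann-sum representation of the sewing map.  If
`g : S_T² → L^p(ℝ^n)` is continuous with `‖(δ̂g)_{tus}‖ ≤ C (t-u)^κ (u-s)^{μ-κ}`
(`μ > 1`), and `Λ` is the map produced by the sewing theorem (continuous on the
simplex, `δ̂Λ = δ̂g`, `‖Λ_{ts}‖ = O((t-s)^μ)`), then with `f_t = g_{t0} - Λ_{t0}`
one has `g_{ts} - Λ_{ts} = f_t - S_{t-s} f_s`, and `f_t - S_{t-s} f_s` is the limit
in `L^p` of the Riemann sums `Σ_k S_{t-t_{k+1}}(g_{t_{k+1} t_k})` over partitions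
of `[s,t]` whose mesh tends to `0`. -/
theorem sewing_riemann_sum_representation
    (n : ℕ) (hn : 1 ≤ n) (p : ℝ) (hp : 1 ≤ p) [Fact (1 ≤ ENNReal.ofReal p)]
    (S : ℝ → LpR n p →L[ℝ] LpR n p)
    (hS0 : S 0 = ContinuousLinearMap.id ℝ (LpR n p))
    (hSheat : ∀ t : ℝ, 0 < t → ∀ φ : LpR n p,
      ⇑(S t φ) =ᵐ[volume] convol (heatKernel n t) ⇑φ)
    (T : ℝ) (hT : 0 < T) (μ : ℝ) (hμ : 1 < μ) (κ : ℝ) (hκ0 : 0 ≤ κ) (hκμ : κ ≤ μ)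
    (g : ℝ → ℝ → LpR n p)
    (hgcont : ContinuousOn (fun r : ℝ × ℝ => g r.1 r.2)
      {r : ℝ × ℝ | 0 ≤ r.2 ∧ r.2 ≤ r.1 ∧ r.1 ≤ T})
    (C : ℝ)
    (hδg : ∀ s u t : ℝ, 0 ≤ s → s ≤ u → u ≤ t → t ≤ T →
      ‖g t s - g t u - S (t - u) (g u s)‖ ≤ C * (t - u) ^ κ * (u - s) ^ (μ - κ))
    (Λg : ℝ → ℝ → LpR n p)
    (hΛcont : ContinuousOn (fun r : ℝ × ℝ => Λg r.1 r.2)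
      {r : ℝ × ℝ | 0 ≤ r.2 ∧ r.2 ≤ r.1 ∧ r.1 ≤ T})
    (hΛbound : ∃ K : ℝ, ∀ s t : ℝ, 0 ≤ s → s ≤ t → t ≤ T → ‖Λg t s‖ ≤ K * (t - s) ^ μ)
    (hΛδ : ∀ s u t : ℝ, 0 ≤ s → s ≤ u → u ≤ t → t ≤ T →
      Λg t s - Λg t u - S (t - u) (Λg u s) = g t s - g t u - S (t - u) (g u s)) :
    (∀ s t : ℝ, 0 ≤ s → s ≤ t → t ≤ T →
      g t s - Λg t s = (g t 0 - Λg t 0) - S (t - s) (g s 0 - Λg s 0)) ∧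
    (∀ s t : ℝ, 0 ≤ s → s ≤ t → t ≤ T →
      ∀ ε : ℝ, 0 < ε → ∃ δ : ℝ, 0 < δ ∧
        ∀ (m : ℕ) (σ : ℕ → ℝ), 0 < m → σ 0 = s → σ m = t →
          (∀ k < m, σ k ≤ σ (k + 1)) → (∀ k < m, σ (k + 1) - σ k ≤ δ) →
          ‖((g t 0 - Λg t 0) - S (t - s) (g s 0 - Λg s 0))
            - ∑ k ∈ Finset.range m, S (t - σ (k + 1)) (g (σ (k + 1)) (σ k))‖ < ε) :=
  sewing_riemann_sum_representation_general n p hp S hS0 hSheat T μ hμ g Λg hΛbound hΛδ
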